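/- Let λ ∈ ℝ, δ > 0, a ∈ ℝ, T > 0. Let μ : [0,T] → ℝ and c : [0,T] → ℝ be continuous, and define the drift functional μ̃(t, x, y) := a e^{λδ}(a e^{λδ} + λ) y + μ(t)(x + a e^{λδ} y). Let X : ℝ → ℝ be continuous and differentiable on (0,T) with X'(t) = μ̃(t, X(t), Y(t)) + a X(t−δ) − c(t) for all t ∈ (0,T), where Y(t) := ∫_{-δ}^{0} e^{λs} X(t+s) ds. Then S(t) := X(t) + a e^{λδ} Y(t) is differentiable on (0,T) and satisfies the delay-free equation S'(t) = (μ(t) + a e^{λδ}) S(t) − c(t) for all t ∈ (0,T). -/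

import Mathlib

/-!
Writing `Y(t) = e^{-λt} ∫_{t-δ}^t e^{λu} X(u) du`, the fundamental theorem of calculus gives
`Y' = X - e^{-λδ} X(· - δ) - λ Y`. In `S' = X' + a e^{λδ} Y'` the discrete delay term
`-a X(t - δ)` coming from `Y'` then cancels the `a X(t - δ)` in the equation for `X`, and the
remaining terms, all linear in `X(t)` and `Y(t)`, regroup as `(μ + a e^{λδ}) S - c`.
-/

open MeasureTheory intervalIntegral

theorem hasDerivAt_integral_sub_const_self {E : Type*} [NormedAddCommGroup E] [NormedSpace ℝ E]
    [CompleteSpace E] {g : ℝ → E} (hg : Continuous g) (δ t : ℝ) :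
    HasDerivAt (fun u => ∫ s in (u - δ)..u, g s) (g t - g (t - δ)) t := by
  have hsplit : (fun u => ∫ s in (u - δ)..u, g s)
      = fun u => (∫ s in (0 : ℝ)..u, g s) - ∫ s in (0 : ℝ)..(u - δ), g s := by
    funext u
    rw [integral_interval_sub_left (hg.intervalIntegrable _ _) (hg.intervalIntegrable _ _)]
  rw [hsplit]
  exact (hg.integral_hasStrictDerivAt 0 t).hasDerivAt.sub
    ((hg.integral_hasStrictDerivAt 0 (t - δ)).hasDerivAt.comp_sub_const t δ)

theorem integral_exp_mul_comp_add_eq (L δ t : ℝ) (X : ℝ → ℝ) :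
    ∫ s in (-δ)..0, Real.exp (L * s) * X (t + s)
      = Real.exp (-(L * t)) * ∫ u in (t - δ)..t, Real.exp (L * u) * X u := by
  have hshift := integral_comp_add_left (a := -δ) (b := 0)
    (fun u => Real.exp (-(L * t)) * (Real.exp (L * u) * X u)) t
  rw [add_zero, ← sub_eq_add_neg] at hshift
  rw [← intervalIntegral.integral_const_mul, ← hshift]
  congr 1
  funext s
  rw [← mul_assoc, ← Real.exp_add]
  ring_nf

theorem hasDerivAt_integral_exp_mul_comp_add {X : ℝ → ℝ} (hX : Continuous X) (L δ t : ℝ) :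
    HasDerivAt (fun u => ∫ s in (-δ)..0, Real.exp (L * s) * X (u + s))
      (X t - Real.exp (-(L * δ)) * X (t - δ)
        - L * ∫ s in (-δ)..0, Real.exp (L * s) * X (t + s)) t := by
  simp only [integral_exp_mul_comp_add_eq]
  have hexp : HasDerivAt (fun u => Real.exp (-(L * u))) (-L * Real.exp (-(L * t))) t := by
    simpa [mul_comm] using (((hasDerivAt_id t).const_mul L).neg).exp
  have hwindow := hasDerivAt_integral_sub_const_self
    (g := fun u => Real.exp (L * u) * X u) (by fun_prop) δ t
  refine (hexp.mul hwindow).congr_deriv ?_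
  have hcancel : Real.exp (-(L * t)) * Real.exp (L * t) = 1 := by
    rw [← Real.exp_add]; simp
  have hshift : Real.exp (-(L * t)) * Real.exp (L * (t - δ)) = Real.exp (-(L * δ)) := by
    rw [← Real.exp_add]; ring_nf
  linear_combination X t * hcancel - X (t - δ) * hshift

theorem consumption_delay_reduction_general
    (L δ a T : ℝ)
    (μ c : ℝ → ℝ)
    (X : ℝ → ℝ) (hX : Continuous X)
    (Y : ℝ → ℝ) (hY : ∀ t, Y t = ∫ s in (-δ)..0, Real.exp (L * s) * X (t + s))
    (hX' : ∀ t ∈ Set.Ioo (0 : ℝ) T,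
      HasDerivAt X
        (a * Real.exp (L * δ) * (a * Real.exp (L * δ) + L) * Y t
          + μ t * (X t + a * Real.exp (L * δ) * Y t) + a * X (t - δ) - c t) t) :
    ∀ t ∈ Set.Ioo (0 : ℝ) T,
      HasDerivAt (fun u => X u + a * Real.exp (L * δ) * Y u)
        ((μ t + a * Real.exp (L * δ)) * (X t + a * Real.exp (L * δ) * Y t) - c t) t := by
  intro t ht
  have hY' := hasDerivAt_integral_exp_mul_comp_add hX L δ t
  rw [← hY t, ← funext hY] at hY'
  refine ((hX' t ht).add (hY'.const_mul (a * Real.exp (L * δ)))).congr_deriv ?_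
  have hexp : Real.exp (L * δ) * Real.exp (-(L * δ)) = 1 := by
    rw [← Real.exp_add]; simp
  linear_combination -(a * X (t - δ)) * hexp

/-- Deterministic reduction of the optimal consumption problem with delay:
with drift `μ̃(t,x,y) = a e^{λδ}(a e^{λδ} + λ) y + μ(t)(x + a e^{λδ} y)`, if
`X'(t) = μ̃(t, X(t), Y(t)) + a X(t-δ) - c(t)` on `(0,T)`, where
`Y(t) = ∫_{-δ}^0 e^{λ s} X(t+s) ds`, then `S = X + a e^{λδ} Y` satisfies the delay-free
equation `S'(t) = (μ(t) + a e^{λδ}) S(t) - c(t)` on `(0,T)`. -/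
theorem consumption_delay_reduction
    (L δ a T : ℝ) (hδ : 0 < δ) (hT : 0 < T)
    (μ c : ℝ → ℝ) (hμ : ContinuousOn μ (Set.Icc 0 T)) (hc : ContinuousOn c (Set.Icc 0 T))
    (X : ℝ → ℝ) (hX : Continuous X)
    (Y : ℝ → ℝ) (hY : ∀ t, Y t = ∫ s in (-δ)..0, Real.exp (L * s) * X (t + s))
    (hX' : ∀ t ∈ Set.Ioo (0 : ℝ) T,
      HasDerivAt X
        (a * Real.exp (L * δ) * (a * Real.exp (L * δ) + L) * Y t
          + μ t * (X t + a * Real.exp (L * δ) * Y t) + a * X (t - δ) - c t) t) :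
    ∀ t ∈ Set.Ioo (0 : ℝ) T,
      HasDerivAt (fun u => X u + a * Real.exp (L * δ) * Y u)
        ((μ t + a * Real.exp (L * δ)) * (X t + a * Real.exp (L * δ) * Y t) - c t) t :=
  consumption_delay_reduction_general L δ a T μ c X hX Y hY hX'
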